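/- Let ρ be a congruence on M_n (n ≥ 1). If 1 ρ b or 1 ρ c (images of the generators b, c in M_n), then ρ = M_n × M_n. -/

import Mathlib

inductive Letter | a | b | c | d | z
deriving DecidableEq

abbrev W := FreeMonoid Letter
def A : W := FreeMonoid.of .a
def B : W := FreeMonoid.of .b
def C : W := FreeMonoid.of .c
def D : W := FreeMonoid.of .d
def Z : W := FreeMonoid.of .z

/-- The defining relations of `M n`, with the zero realized by the letter `z`. -/
def relM (n : ℕ) : W → W → Prop := fun x y =>
  (x = A ^ n * B ∧ y = Z) ∨
  (x = A * C ∧ y = 1) ∨ (x = D * B ∧ y = 1) ∨ (x = D * C ∧ y = 1) ∨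
  (∃ k, 1 ≤ k ∧ k ≤ n - 1 ∧ x = D * A ^ k * B ∧ y = 1) ∨
  (∃ l : Letter, x = FreeMonoid.of l * Z ∧ y = Z) ∨
  (∃ l : Letter, x = Z * FreeMonoid.of l ∧ y = Z)

def Mcon (n : ℕ) : Con W := conGen (relM n)

/-- The monoid `M n = Mon⟨a,b,c,d : aⁿb=0, ac=1, db=1, dc=1, daᵏb=1 (1 ≤ k ≤ n-1)⟩`. -/
abbrev M (n : ℕ) := (Mcon n).Quotient

/-! A congruence with `1 ρ c` gives `d ρ dc = 1`, hence `b ρ db = 1`. From `1 ρ b`,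
`1 = aⁿcⁿ ρ aⁿbcⁿ = 0`, and a congruence identifying `1` with a zero is total. -/

namespace Con

variable {N : Type*} [Monoid N] (ρ : Con N)

theorem rel_one_of_rel_one_of_mul_eq_one {b c d : N} (hdb : d * b = 1) (hdc : d * c = 1)
    (h : ρ 1 c) : ρ 1 b := by
  have hd : ρ d 1 := by simpa [hdc] using ρ.mul (ρ.refl d) h
  simpa [hdb] using ρ.mul hd (ρ.refl b)

theorem rel_one_of_rel_one_of_mul_eq {b x y z : N} (hxy : x * y = 1) (hxb : x * b = z)
    (hzy : z * y = z) (h : ρ 1 b) : ρ 1 z := by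
  have := ρ.mul (ρ.mul (ρ.refl x) h) (ρ.refl y)
  rwa [mul_one, hxy, hxb, hzy] at this

theorem eq_top_of_rel_one {z : N} (hz : ∀ x, x * z = z) (h : ρ 1 z) : ρ = ⊤ := by
  have hrel : ∀ x, ρ x z := fun x => by simpa [hz] using ρ.mul (ρ.refl x) h
  exact eq_top_iff.mpr fun x y _ => ρ.trans (hrel x) (ρ.symm (hrel y))

end Con

namespace M

variable {n : ℕ}

theorem mk_eq_of_relM {x y : W} (h : relM n x y) : (x : M n) = y :=
  (Con.eq _).mpr (ConGen.Rel.of _ _ h)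

theorem a_mul_c : (A : M n) * C = 1 := mk_eq_of_relM (by simp [relM])

theorem d_mul_b : (D : M n) * B = 1 := mk_eq_of_relM (by simp [relM])

theorem d_mul_c : (D : M n) * C = 1 := mk_eq_of_relM (by simp [relM])

theorem a_pow_mul_b : (A : M n) ^ n * B = Z := mk_eq_of_relM (by simp [relM])

theorem mul_z (x : M n) : x * Z = Z := by
  induction x using Con.induction_on with | H w => ?_
  induction w using FreeMonoid.inductionOn with
  | one => exact one_mul _
  | of l => exact mk_eq_of_relM (.inr <| .inr <| .inr <| .inr <| .inr <| .inl ⟨l, rfl, rfl⟩)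
  | mul x y hx hy => rw [Con.coe_mul, mul_assoc, hy, hx]

theorem z_mul (x : M n) : Z * x = Z := by
  induction x using Con.induction_on with | H w => ?_
  induction w using FreeMonoid.inductionOn with
  | one => exact mul_one _
  | of l => exact mk_eq_of_relM (.inr <| .inr <| .inr <| .inr <| .inr <| .inr ⟨l, rfl, rfl⟩)
  | mul x y hx hy => rw [Con.coe_mul, ← mul_assoc, hx, hy]

end M

theorem stmt8_general (n : ℕ) (ρ : Con (M n))
    (h : ρ 1 (B : M n) ∨ ρ 1 (C : M n)) : ρ = ⊤ := by
  have hb : ρ 1 (B : M n) :=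
    h.elim id (ρ.rel_one_of_rel_one_of_mul_eq_one M.d_mul_b M.d_mul_c)
  have hz : ρ 1 (Z : M n) :=
    ρ.rel_one_of_rel_one_of_mul_eq (pow_mul_pow_eq_one n M.a_mul_c) M.a_pow_mul_b (M.z_mul _) hb
  exact ρ.eq_top_of_rel_one M.mul_z hz

/-- If a congruence on `M n` identifies `1` with `b` or with `c`,
it is the full congruence. -/
theorem stmt8 (n : ℕ) (hn : 1 ≤ n) (ρ : Con (M n))
    (h : ρ 1 (B : M n) ∨ ρ 1 (C : M n)) : ρ = ⊤ :=
  stmt8_general n ρ h
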